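/- arXiv:2408.14093 — 4 statements merged into one kernel-verified Lean document; each statement's English description precedes it below -/
import Mathlib

section
/- Let (X₁,d₁,W₁), …, (Xₙ,dₙ,Wₙ) be W-hyperbolic spaces each having property (G) with moduli ψ₁, …, ψₙ. Then the product X = ∏ᵢ Xᵢ, with ℓ² product metric and componentwise W, has property (G) with modulus ψ(r,ε) = minᵢ ψᵢ(r, ε/√n). -/
/-- If each factor is a W-hyperbolic space with property (G) with modulus ψᵢ,
then the ℓ² product has property (G) with modulus ψ(r,ε) = minᵢ ψᵢ(r, ε/√n),
where n is the number of factors. -/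
theorem stmt6 {n : ℕ} {X : Fin (n+1) → Type*} [∀ i, MetricSpace (X i)]
    (W : ∀ i, X i → X i → ℝ → X i)
    (hW1 : ∀ i, ∀ x y z : X i, ∀ t ∈ Set.Icc (0:ℝ) 1,
      dist z (W i x y t) ≤ (1 - t) * dist z x + t * dist z y)
    (hW2 : ∀ i, ∀ x y : X i, ∀ t ∈ Set.Icc (0:ℝ) 1, ∀ s ∈ Set.Icc (0:ℝ) 1,
      dist (W i x y t) (W i x y s) = |t - s| * dist x y)
    (hW3 : ∀ i, ∀ x y : X i, ∀ t ∈ Set.Icc (0:ℝ) 1, W i x y t = W i y x (1 - t))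
    (hW4 : ∀ i, ∀ x y z w : X i, ∀ t ∈ Set.Icc (0:ℝ) 1,
      dist (W i x z t) (W i y w t) ≤ (1 - t) * dist x y + t * dist z w)
    (ψ : Fin (n+1) → ℝ → ℝ → ℝ)
    (hψpos : ∀ i r ε, 0 < r → 0 < ε → 0 < ψ i r ε)
    (hG : ∀ i, ∀ r ε : ℝ, 0 < r → 0 < ε → ∀ a x y : X i,
      dist x a ≤ r → dist y a ≤ r → dist x y ≥ ε →
      dist (W i x y (1/2)) a ^ 2 ≤
        (1/2) * dist x a ^ 2 + (1/2) * dist y a ^ 2 - ψ i r ε) :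
    ∀ r ε : ℝ, 0 < r → 0 < ε → ∀ a x y : (∀ i, X i),
      Real.sqrt (∑ i, dist (x i) (a i) ^ 2) ≤ r →
      Real.sqrt (∑ i, dist (y i) (a i) ^ 2) ≤ r →
      Real.sqrt (∑ i, dist (x i) (y i) ^ 2) ≥ ε →
      Real.sqrt (∑ i, dist (W i (x i) (y i) (1/2)) (a i) ^ 2) ^ 2 ≤
        (1/2) * Real.sqrt (∑ i, dist (x i) (a i) ^ 2) ^ 2 +
          (1/2) * Real.sqrt (∑ i, dist (y i) (a i) ^ 2) ^ 2 -
            Finset.univ.inf' Finset.univ_nonempty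
              (fun i => ψ i r (ε / Real.sqrt (n+1))) := by
  intro r ε hr hε a x y hxa hya hxy
  have hnnx : (0:ℝ) ≤ ∑ i, dist (x i) (a i) ^ 2 :=
    Finset.sum_nonneg fun i _ => sq_nonneg _
  have hnny : (0:ℝ) ≤ ∑ i, dist (y i) (a i) ^ 2 :=
    Finset.sum_nonneg fun i _ => sq_nonneg _
  have hnnw : (0:ℝ) ≤ ∑ i, dist (W i (x i) (y i) (1/2)) (a i) ^ 2 :=
    Finset.sum_nonneg fun i _ => sq_nonneg _
  have hnnxy : (0:ℝ) ≤ ∑ i, dist (x i) (y i) ^ 2 :=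
    Finset.sum_nonneg fun i _ => sq_nonneg _
  rw [Real.sq_sqrt hnnw, Real.sq_sqrt hnnx, Real.sq_sqrt hnny]
  set ε' := ε / Real.sqrt (n+1) with hε'def
  have hn1 : (0:ℝ) < (n:ℝ) + 1 := by positivity
  have hε' : 0 < ε' := div_pos hε (Real.sqrt_pos.mpr hn1)
  -- component bounds for distances to a
  have hdx : ∀ i, dist (x i) (a i) ≤ r := by
    intro i
    calc dist (x i) (a i) = Real.sqrt (dist (x i) (a i) ^ 2) :=
          (Real.sqrt_sq dist_nonneg).symm
      _ ≤ Real.sqrt (∑ j, dist (x j) (a j) ^ 2) :=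
          Real.sqrt_le_sqrt (Finset.single_le_sum (f := fun j => dist (x j) (a j) ^ 2) (fun j _ => sq_nonneg _)
            (Finset.mem_univ i))
      _ ≤ r := hxa
  have hdy : ∀ i, dist (y i) (a i) ≤ r := by
    intro i
    calc dist (y i) (a i) = Real.sqrt (dist (y i) (a i) ^ 2) :=
          (Real.sqrt_sq dist_nonneg).symm
      _ ≤ Real.sqrt (∑ j, dist (y j) (a j) ^ 2) :=
          Real.sqrt_le_sqrt (Finset.single_le_sum (f := fun j => dist (y j) (a j) ^ 2) (fun j _ => sq_nonneg _)
            (Finset.mem_univ i))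
      _ ≤ r := hya
  -- find a coordinate with large separation
  have hsum : ε ^ 2 ≤ ∑ i, dist (x i) (y i) ^ 2 := by
    have h1 : ε ^ 2 ≤ Real.sqrt (∑ i, dist (x i) (y i) ^ 2) ^ 2 :=
      pow_le_pow_left₀ hε.le hxy 2
    rwa [Real.sq_sqrt hnnxy] at h1
  have hconst : ∑ _i : Fin (n+1), ε ^ 2 / ((n:ℝ)+1) ≤ ∑ i, dist (x i) (y i) ^ 2 := by
    rw [Finset.sum_const, Finset.card_univ, Fintype.card_fin, nsmul_eq_mul]
    push_cast
    rw [mul_div_cancel₀ _ (ne_of_gt hn1)]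
    exact hsum
  obtain ⟨i₀, -, hi₀⟩ := Finset.exists_le_of_sum_le Finset.univ_nonempty hconst
  have hi₀' : ε' ≤ dist (x i₀) (y i₀) := by
    have hsq : ε' ^ 2 = ε ^ 2 / ((n:ℝ)+1) := by
      rw [hε'def, div_pow, Real.sq_sqrt hn1.le]
    have hd : (0:ℝ) ≤ dist (x i₀) (y i₀) := dist_nonneg
    nlinarith [hi₀, hsq]
  -- component-wise midpoint bounds
  have hmid : ∀ i, dist (W i (x i) (y i) (1/2)) (a i) ^ 2 ≤
      (1/2) * dist (x i) (a i) ^ 2 + (1/2) * dist (y i) (a i) ^ 2 := by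
    intro i
    have h1 := hW1 i (x i) (y i) (a i) (1/2) (by norm_num)
    rw [dist_comm (a i) (W i (x i) (y i) (1/2)), dist_comm (a i) (x i), dist_comm (a i) (y i)] at h1
    have h2 : (0:ℝ) ≤ dist (W i (x i) (y i) (1/2)) (a i) := dist_nonneg
    nlinarith [sq_nonneg (dist (x i) (a i) - dist (y i) (a i)), dist_nonneg (x := x i) (y := a i), dist_nonneg (x := y i) (y := a i)]
  have hG₀ := hG i₀ r ε' hr hε' (a i₀) (x i₀) (y i₀) (hdx i₀) (hdy i₀) hi₀'
  -- sum the bounds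
  have hkey : ∑ i, dist (W i (x i) (y i) (1/2)) (a i) ^ 2 ≤
      (∑ i, ((1/2) * dist (x i) (a i) ^ 2 + (1/2) * dist (y i) (a i) ^ 2)) - ψ i₀ r ε' := by
    rw [← Finset.add_sum_erase _ _ (Finset.mem_univ i₀),
        ← Finset.add_sum_erase _ (fun i => (1/2) * dist (x i) (a i) ^ 2 + (1/2) * dist (y i) (a i) ^ 2) (Finset.mem_univ i₀)]
    have h3 : ∑ i ∈ Finset.univ.erase i₀, dist (W i (x i) (y i) (1/2)) (a i) ^ 2 ≤
        ∑ i ∈ Finset.univ.erase i₀, ((1/2) * dist (x i) (a i) ^ 2 + (1/2) * dist (y i) (a i) ^ 2) :=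
      Finset.sum_le_sum fun i _ => hmid i
    linarith
  have hinf : Finset.univ.inf' Finset.univ_nonempty (fun i => ψ i r ε') ≤ ψ i₀ r ε' :=
    Finset.inf'_le _ (Finset.mem_univ i₀)
  have hsplit : ∑ i, ((1/2) * dist (x i) (a i) ^ 2 + (1/2) * dist (y i) (a i) ^ 2) =
      (1/2) * (∑ i, dist (x i) (a i) ^ 2) + (1/2) * (∑ i, dist (y i) (a i) ^ 2) := by
    rw [Finset.sum_add_distrib, ← Finset.mul_sum, ← Finset.mul_sum]
  linarith
end

section
/- Let (X₁,d₁,W₁), …, (Xₙ,dₙ,Wₙ) be W-hyperbolic spaces each having property (M) with moduli ψ₁, …, ψₙ. Set ψ(r,ε) = minᵢ ψᵢ(r,ε) and ψ̌(r,ε) = min( ψ(r,ε/√n)²/(64n²r²), ψ(r,ε/√n)/2 ). Then the product X = ∏ᵢ Xᵢ, with ℓ² product metric and componentwise W, has property (M) with modulus ψ̌. -/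
private lemma stmt7_aux {u v m ps0 psm r nn : ℝ} (hu : 0 ≤ u) (hv : 0 ≤ v)
    (hur : u ≤ r) (hvr : v ≤ r) (hpsm : 0 < psm) (hle : psm ≤ ps0)
    (hM : m ^ 2 ≤ max (u ^ 2) (v ^ 2) - ps0)
    (hmid : m ^ 2 ≤ (u ^ 2 + v ^ 2) / 2 - ((u - v) / 2) ^ 2)
    (hn : 1 ≤ nn) (hr : 0 < r) :
    m ^ 2 ≤ (u ^ 2 + v ^ 2) / 2 - min (psm ^ 2 / (64 * nn ^ 2 * r ^ 2)) (psm / 2) := by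
  rcases le_or_gt |u ^ 2 - v ^ 2| psm with hcase | hcase
  · obtain ⟨h1, h2⟩ := abs_le.mp hcase
    have hmax : max (u ^ 2) (v ^ 2) ≤ (u ^ 2 + v ^ 2) / 2 + psm / 2 := by
      rcases max_cases (u ^ 2) (v ^ 2) with ⟨he, _⟩ | ⟨he, _⟩ <;> rw [he] <;> linarith
    have hle2 : min (psm ^ 2 / (64 * nn ^ 2 * r ^ 2)) (psm / 2) ≤ psm / 2 :=
      min_le_right _ _
    linarith
  · have h2 : psm ^ 2 ≤ (u ^ 2 - v ^ 2) ^ 2 := by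
      have := pow_le_pow_left₀ hpsm.le hcase.le 2
      rwa [sq_abs] at this
    have h4 : (u + v) ^ 2 ≤ 4 * r ^ 2 := by nlinarith
    have h5 : psm ^ 2 ≤ (u - v) ^ 2 * (4 * r ^ 2) := by nlinarith [sq_nonneg (u - v)]
    have hn2 : (1:ℝ) ≤ nn ^ 2 := by nlinarith
    have h8 : psm ^ 2 * 1 ≤ (u - v) ^ 2 * (4 * r ^ 2) * nn ^ 2 :=
      mul_le_mul h5 hn2 zero_le_one (by positivity)
    have h7 : psm ^ 2 / (64 * nn ^ 2 * r ^ 2) ≤ ((u - v) / 2) ^ 2 := by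
      rw [div_le_iff₀ (by positivity)]
      nlinarith [h8]
    have h6 : min (psm ^ 2 / (64 * nn ^ 2 * r ^ 2)) (psm / 2) ≤ ((u - v) / 2) ^ 2 :=
      le_trans (min_le_left _ _) h7
    linarith


set_option maxHeartbeats 1600000 in
/-- If each factor is a W-hyperbolic space with property (M) with modulus ψᵢ,
then the ℓ² product has property (M) with modulus
ψ̌(r,ε) = min( ψ(r,ε/√n)²/(64n²r²), ψ(r,ε/√n)/2 ), where ψ = minᵢ ψᵢ. -/
theorem stmt7 {n : ℕ} {X : Fin (n+1) → Type*} [∀ i, MetricSpace (X i)]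
    (W : ∀ i, X i → X i → ℝ → X i)
    (hW1 : ∀ i, ∀ x y z : X i, ∀ t ∈ Set.Icc (0:ℝ) 1,
      dist z (W i x y t) ≤ (1 - t) * dist z x + t * dist z y)
    (hW2 : ∀ i, ∀ x y : X i, ∀ t ∈ Set.Icc (0:ℝ) 1, ∀ s ∈ Set.Icc (0:ℝ) 1,
      dist (W i x y t) (W i x y s) = |t - s| * dist x y)
    (hW3 : ∀ i, ∀ x y : X i, ∀ t ∈ Set.Icc (0:ℝ) 1, W i x y t = W i y x (1 - t))
    (hW4 : ∀ i, ∀ x y z w : X i, ∀ t ∈ Set.Icc (0:ℝ) 1,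
      dist (W i x z t) (W i y w t) ≤ (1 - t) * dist x y + t * dist z w)
    (ψ : Fin (n+1) → ℝ → ℝ → ℝ)
    (hψpos : ∀ i r ε, 0 < r → 0 < ε → 0 < ψ i r ε)
    (hM : ∀ i, ∀ r ε : ℝ, 0 < r → 0 < ε → ∀ a x y : X i,
      dist x a ≤ r → dist y a ≤ r → dist x y ≥ ε →
      dist (W i x y (1/2)) a ^ 2 ≤
        max (dist x a ^ 2) (dist y a ^ 2) - ψ i r ε) :
    ∀ r ε : ℝ, 0 < r → 0 < ε → ∀ a x y : (∀ i, X i),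
      Real.sqrt (∑ i, dist (x i) (a i) ^ 2) ≤ r →
      Real.sqrt (∑ i, dist (y i) (a i) ^ 2) ≤ r →
      Real.sqrt (∑ i, dist (x i) (y i) ^ 2) ≥ ε →
      Real.sqrt (∑ i, dist (W i (x i) (y i) (1/2)) (a i) ^ 2) ^ 2 ≤
        max (Real.sqrt (∑ i, dist (x i) (a i) ^ 2) ^ 2)
            (Real.sqrt (∑ i, dist (y i) (a i) ^ 2) ^ 2) -
          min ((Finset.univ.inf' Finset.univ_nonempty
                  (fun i => ψ i r (ε / Real.sqrt (n+1)))) ^ 2 /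
                (64 * (n+1) ^ 2 * r ^ 2))
              ((Finset.univ.inf' Finset.univ_nonempty
                  (fun i => ψ i r (ε / Real.sqrt (n+1)))) / 2) := by
  intro r ε hr hε a x y hxa hya hxy
  have hSxnn : (0:ℝ) ≤ ∑ i, dist (x i) (a i) ^ 2 :=
    Finset.sum_nonneg fun i _ => sq_nonneg _
  have hSynn : (0:ℝ) ≤ ∑ i, dist (y i) (a i) ^ 2 :=
    Finset.sum_nonneg fun i _ => sq_nonneg _
  have hSmnn : (0:ℝ) ≤ ∑ i, dist (W i (x i) (y i) (1/2)) (a i) ^ 2 :=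
    Finset.sum_nonneg fun i _ => sq_nonneg _
  have hSxynn : (0:ℝ) ≤ ∑ i, dist (x i) (y i) ^ 2 :=
    Finset.sum_nonneg fun i _ => sq_nonneg _
  rw [Real.sq_sqrt hSmnn, Real.sq_sqrt hSxnn, Real.sq_sqrt hSynn]
  have hnp : (0:ℝ) < (n:ℝ) + 1 := by positivity
  -- bounds on sums
  have hSxr : ∑ i, dist (x i) (a i) ^ 2 ≤ r ^ 2 := by
    calc ∑ i, dist (x i) (a i) ^ 2
        = Real.sqrt (∑ i, dist (x i) (a i) ^ 2) ^ 2 := (Real.sq_sqrt hSxnn).symm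
      _ ≤ r ^ 2 := pow_le_pow_left₀ (Real.sqrt_nonneg _) hxa 2
  have hSyr : ∑ i, dist (y i) (a i) ^ 2 ≤ r ^ 2 := by
    calc ∑ i, dist (y i) (a i) ^ 2
        = Real.sqrt (∑ i, dist (y i) (a i) ^ 2) ^ 2 := (Real.sq_sqrt hSynn).symm
      _ ≤ r ^ 2 := pow_le_pow_left₀ (Real.sqrt_nonneg _) hya 2
  have hε2 : ε ^ 2 ≤ ∑ i, dist (x i) (y i) ^ 2 := by
    calc ε ^ 2 ≤ Real.sqrt (∑ i, dist (x i) (y i) ^ 2) ^ 2 :=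
          pow_le_pow_left₀ hε.le hxy 2
      _ = _ := Real.sq_sqrt hSxynn
  -- coordinate bounds
  have hur : ∀ i, dist (x i) (a i) ≤ r := by
    intro i
    have h1 : dist (x i) (a i) ^ 2 ≤ r ^ 2 :=
      le_trans (Finset.single_le_sum (f := fun i => dist (x i) (a i) ^ 2)
        (fun i _ => sq_nonneg _) (Finset.mem_univ i)) hSxr
    nlinarith [dist_nonneg (x := x i) (y := a i)]
  have hvr : ∀ i, dist (y i) (a i) ≤ r := by
    intro i
    have h1 : dist (y i) (a i) ^ 2 ≤ r ^ 2 :=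
      le_trans (Finset.single_le_sum (f := fun i => dist (y i) (a i) ^ 2)
        (fun i _ => sq_nonneg _) (Finset.mem_univ i)) hSyr
    nlinarith [dist_nonneg (x := y i) (y := a i)]
  -- find a good coordinate
  obtain ⟨i₀, hi₀⟩ : ∃ i₀ : Fin (n+1), ε ^ 2 / ((n:ℝ)+1) ≤ dist (x i₀) (y i₀) ^ 2 := by
    by_contra h
    push_neg at h
    have hlt : ∑ i, dist (x i) (y i) ^ 2 < ∑ _i : Fin (n+1), ε ^ 2 / ((n:ℝ)+1) :=
      Finset.sum_lt_sum_of_nonempty Finset.univ_nonempty (fun i _ => h i)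
    rw [Finset.sum_const, Finset.card_univ, Fintype.card_fin, nsmul_eq_mul] at hlt
    push_cast at hlt
    rw [mul_div_cancel₀ _ (ne_of_gt hnp)] at hlt
    linarith
  have hε'pos : 0 < ε / Real.sqrt ((n:ℝ)+1) :=
    div_pos hε (Real.sqrt_pos.2 hnp)
  have hε'sq : (ε / Real.sqrt ((n:ℝ)+1)) ^ 2 = ε ^ 2 / ((n:ℝ)+1) := by
    rw [div_pow, Real.sq_sqrt hnp.le]
  have hdist_i₀ : dist (x i₀) (y i₀) ≥ ε / Real.sqrt ((n:ℝ)+1) := by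
    have h1 : (ε / Real.sqrt ((n:ℝ)+1)) ^ 2 ≤ dist (x i₀) (y i₀) ^ 2 := by
      rw [hε'sq]; exact hi₀
    nlinarith [dist_nonneg (x := x i₀) (y := y i₀), hε'pos]
  -- ψmin
  set ψm := Finset.univ.inf' Finset.univ_nonempty
      (fun i => ψ i r (ε / Real.sqrt ((n:ℝ)+1))) with hψm
  have hψm_pos : 0 < ψm := by
    rw [hψm]
    exact (Finset.lt_inf'_iff _).2 fun i _ => hψpos i r _ hr hε'pos
  have hψm_le : ψm ≤ ψ i₀ r (ε / Real.sqrt ((n:ℝ)+1)) :=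
    Finset.inf'_le _ (Finset.mem_univ i₀)
  have hM0 := hM i₀ r (ε / Real.sqrt ((n:ℝ)+1)) hr hε'pos (a i₀) (x i₀) (y i₀)
    (hur i₀) (hvr i₀) hdist_i₀
  -- midpoint coordinate estimate
  have hmid : ∀ i, dist (W i (x i) (y i) (1/2)) (a i) ≤
      (dist (x i) (a i) + dist (y i) (a i)) / 2 := by
    intro i
    have h1 := hW1 i (x i) (y i) (a i) (1/2) ⟨by norm_num, by norm_num⟩
    rw [dist_comm (a i) (x i), dist_comm (a i) (y i)] at h1
    rw [dist_comm (W i (x i) (y i) (1/2)) (a i)]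
    linarith
  have hmidsq : ∀ i, dist (W i (x i) (y i) (1/2)) (a i) ^ 2 ≤
      (dist (x i) (a i) ^ 2 + dist (y i) (a i) ^ 2) / 2 -
        ((dist (x i) (a i) - dist (y i) (a i)) / 2) ^ 2 := by
    intro i
    nlinarith [hmid i, dist_nonneg (x := W i (x i) (y i) (1/2)) (y := a i),
      dist_nonneg (x := x i) (y := a i), dist_nonneg (x := y i) (y := a i)]
  set ψc := min (ψm ^ 2 / (64 * ((n:ℝ)+1) ^ 2 * r ^ 2)) (ψm / 2) with hψc
  -- key single-coordinate claim
  have claim : dist (W i₀ (x i₀) (y i₀) (1/2)) (a i₀) ^ 2 ≤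
      (dist (x i₀) (a i₀) ^ 2 + dist (y i₀) (a i₀) ^ 2) / 2 - ψc := by
    have hn1 : (1:ℝ) ≤ (n:ℝ) + 1 := by
      have := Nat.cast_nonneg (α := ℝ) n; linarith
    exact stmt7_aux dist_nonneg dist_nonneg (hur i₀) (hvr i₀) hψm_pos hψm_le
      hM0 (hmidsq i₀) hn1 hr
  -- summation
  have hsum : ∑ i, dist (W i (x i) (y i) (1/2)) (a i) ^ 2 ≤
      (∑ i, dist (x i) (a i) ^ 2 + ∑ i, dist (y i) (a i) ^ 2) / 2 - ψc := by
    have herase : ∀ i ∈ Finset.univ.erase i₀,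
        dist (W i (x i) (y i) (1/2)) (a i) ^ 2 ≤
          (dist (x i) (a i) ^ 2 + dist (y i) (a i) ^ 2) / 2 := by
      intro i _
      have := hmidsq i
      nlinarith [sq_nonneg ((dist (x i) (a i) - dist (y i) (a i)) / 2)]
    have e1 : ∑ i, dist (W i (x i) (y i) (1/2)) (a i) ^ 2 =
        dist (W i₀ (x i₀) (y i₀) (1/2)) (a i₀) ^ 2 +
          ∑ i ∈ Finset.univ.erase i₀, dist (W i (x i) (y i) (1/2)) (a i) ^ 2 :=
      (Finset.add_sum_erase _ _ (Finset.mem_univ i₀)).symm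
    have e2 : ∑ i : Fin (n+1), (dist (x i) (a i) ^ 2 + dist (y i) (a i) ^ 2) / 2 =
        (dist (x i₀) (a i₀) ^ 2 + dist (y i₀) (a i₀) ^ 2) / 2 +
          ∑ i ∈ Finset.univ.erase i₀,
            (dist (x i) (a i) ^ 2 + dist (y i) (a i) ^ 2) / 2 :=
      (Finset.add_sum_erase _ _ (Finset.mem_univ i₀)).symm
    have e3 : ∑ i : Fin (n+1), (dist (x i) (a i) ^ 2 + dist (y i) (a i) ^ 2) / 2 =
        (∑ i, dist (x i) (a i) ^ 2 + ∑ i, dist (y i) (a i) ^ 2) / 2 := by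
      rw [← Finset.sum_div, Finset.sum_add_distrib]
    have h8 := Finset.sum_le_sum herase
    rw [e1]
    rw [e3] at e2
    linarith [claim]
  have hmax2 : (∑ i, dist (x i) (a i) ^ 2 + ∑ i, dist (y i) (a i) ^ 2) / 2 ≤
      max (∑ i, dist (x i) (a i) ^ 2) (∑ i, dist (y i) (a i) ^ 2) := by
    rcases max_cases (∑ i, dist (x i) (a i) ^ 2) (∑ i, dist (y i) (a i) ^ 2) with
      ⟨he, h⟩ | ⟨he, h⟩ <;> rw [he] <;> linarith
  calc ∑ i, dist (W i (x i) (y i) (1/2)) (a i) ^ 2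
      ≤ (∑ i, dist (x i) (a i) ^ 2 + ∑ i, dist (y i) (a i) ^ 2) / 2 - ψc := hsum
    _ ≤ max (∑ i, dist (x i) (a i) ^ 2) (∑ i, dist (y i) (a i) ^ 2) - ψc := by
        linarith
end

section
/- Let (X₁,d₁,W₁), …, (Xₙ,dₙ,Wₙ) be UCW-hyperbolic spaces with monotone moduli of uniform convexity η₁, …, ηₙ. Define η(r,ε) = min({ηᵢ(r,ε) : 1 ≤ i ≤ n} ∪ {1/2}) and η̌(r,ε) = min( (ε⁴/(4608 n⁴))·η(r, ε/√n)², (ε²/(16n))·η(r, ε/√n) ). Then η̌ is a monotone modulus of uniform convexity for the product X = ∏ᵢ Xᵢ with the ℓ² product metric and componentwise W; in particular, the product of UCW-hyperbolic spaces is a UCW-hyperbolic space. -/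
/-- Key elementary inequality: if `m ≤ (u+v)/2`, `m ≤ (1-e)u` with `v ≤ u`,
`0 < e ≤ 1/2`, then `m² + (e²/4)u² ≤ (u²+v²)/2`. -/
lemma stmt8_key (u v m e : ℝ) (hv : 0 ≤ v) (hvu : v ≤ u) (hm0 : 0 ≤ m)
    (hm1 : m ≤ (u + v) / 2) (hm2 : m ≤ (1 - e) * u) (he0 : 0 < e) (he1 : e ≤ 1/2) :
    m ^ 2 + e ^ 2 / 4 * u ^ 2 ≤ (u ^ 2 + v ^ 2) / 2 := by
  rcases le_or_gt (e * u) (u - v) with h | h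
  · have h1 : m * m ≤ ((u + v) / 2) * ((u + v) / 2) := mul_self_le_mul_self hm0 hm1
    have h2 : (e * u) * (e * u) ≤ (u - v) * (u - v) :=
      mul_self_le_mul_self (mul_nonneg he0.le (hv.trans hvu)) h
    nlinarith [h1, h2]
  · have hv' : (1 - e) * u < v := by nlinarith
    have h1 : m * m ≤ ((1 - e) * u) * ((1 - e) * u) :=
      mul_self_le_mul_self hm0 hm2
    have h2 : ((1 - e) * u) * ((1 - e) * u) ≤ v * v :=
      mul_self_le_mul_self (by nlinarith) hv'.le
    nlinarith [h1, h2, sq_nonneg u, mul_nonneg (mul_nonneg he0.le he0.le) (sq_nonneg u)]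

set_option maxHeartbeats 2000000 in
/-- The ℓ² product of UCW-hyperbolic spaces (with monotone moduli of uniform
convexity ηᵢ) is UCW-hyperbolic, with monotone modulus
η̌(r,ε) = min( (ε⁴/(4608n⁴))·η(r,ε/√n)², (ε²/(16n))·η(r,ε/√n) ),
where η(r,ε) = min(minᵢ ηᵢ(r,ε), 1/2). -/
theorem stmt8 {n : ℕ} {X : Fin (n+1) → Type*} [∀ i, MetricSpace (X i)]
    (W : ∀ i, X i → X i → ℝ → X i)
    (hW1 : ∀ i, ∀ x y z : X i, ∀ t ∈ Set.Icc (0:ℝ) 1,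
      dist z (W i x y t) ≤ (1 - t) * dist z x + t * dist z y)
    (hW2 : ∀ i, ∀ x y : X i, ∀ t ∈ Set.Icc (0:ℝ) 1, ∀ s ∈ Set.Icc (0:ℝ) 1,
      dist (W i x y t) (W i x y s) = |t - s| * dist x y)
    (hW3 : ∀ i, ∀ x y : X i, ∀ t ∈ Set.Icc (0:ℝ) 1, W i x y t = W i y x (1 - t))
    (hW4 : ∀ i, ∀ x y z w : X i, ∀ t ∈ Set.Icc (0:ℝ) 1,
      dist (W i x z t) (W i y w t) ≤ (1 - t) * dist x y + t * dist z w)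
    (η : Fin (n+1) → ℝ → ℝ → ℝ)
    (hηrange : ∀ i, ∀ r ε : ℝ, 0 < r → ε ∈ Set.Ioc (0:ℝ) 2 →
      η i r ε ∈ Set.Ioc (0:ℝ) 1)
    (hηmono : ∀ i, ∀ r s ε : ℝ, 0 < s → s ≤ r → ε ∈ Set.Ioc (0:ℝ) 2 →
      η i r ε ≤ η i s ε)
    (hUC : ∀ i, ∀ r ε : ℝ, 0 < r → ε ∈ Set.Ioc (0:ℝ) 2 → ∀ a x y : X i,
      dist x a ≤ r → dist y a ≤ r → dist x y ≥ ε * r →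
      dist (W i x y (1/2)) a ≤ (1 - η i r ε) * r) :
    ∀ ηbar ηcheck : ℝ → ℝ → ℝ,
      (∀ r ε : ℝ, ηbar r ε =
        min (Finset.univ.inf' Finset.univ_nonempty (fun i => η i r ε)) (1/2)) →
      (∀ r ε : ℝ, ηcheck r ε =
        min ((ε ^ 4 / (4608 * (n+1) ^ 4)) * (ηbar r (ε / Real.sqrt (n+1))) ^ 2)
            ((ε ^ 2 / (16 * (n+1))) * ηbar r (ε / Real.sqrt (n+1)))) →
      ((∀ r ε : ℝ, 0 < r → ε ∈ Set.Ioc (0:ℝ) 2 →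
          ηcheck r ε ∈ Set.Ioc (0:ℝ) 1) ∧
       (∀ r s ε : ℝ, 0 < s → s ≤ r → ε ∈ Set.Ioc (0:ℝ) 2 →
          ηcheck r ε ≤ ηcheck s ε) ∧
       (∀ r ε : ℝ, 0 < r → ε ∈ Set.Ioc (0:ℝ) 2 → ∀ a x y : (∀ i, X i),
          Real.sqrt (∑ i, dist (x i) (a i) ^ 2) ≤ r →
          Real.sqrt (∑ i, dist (y i) (a i) ^ 2) ≤ r →
          Real.sqrt (∑ i, dist (x i) (y i) ^ 2) ≥ ε * r →
          Real.sqrt (∑ i, dist (W i (x i) (y i) (1/2)) (a i) ^ 2) ≤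
            (1 - ηcheck r ε) * r)) := by
  intro ηbar ηcheck hbar hcheck
  have hN1 : (1:ℝ) ≤ (n:ℝ) + 1 := by
    have : (0:ℝ) ≤ (n:ℝ) := Nat.cast_nonneg n
    linarith
  have hNpos : (0:ℝ) < (n:ℝ) + 1 := by linarith
  have hsqpos : 0 < Real.sqrt ((n:ℝ) + 1) := Real.sqrt_pos.mpr hNpos
  have hs1 : (1:ℝ) ≤ Real.sqrt ((n:ℝ) + 1) := by
    have h := Real.sqrt_le_sqrt hN1
    simpa using h
  have hssq : Real.sqrt ((n:ℝ) + 1) ^ 2 = (n:ℝ) + 1 := Real.sq_sqrt (le_of_lt hNpos)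
  have hε' : ∀ ε : ℝ, ε ∈ Set.Ioc (0:ℝ) 2 →
      ε / Real.sqrt ((n:ℝ)+1) ∈ Set.Ioc (0:ℝ) 2 := by
    intro ε hε
    constructor
    · exact div_pos hε.1 hsqpos
    · rw [div_le_iff₀ hsqpos]
      nlinarith [hε.2]
  have hbar_le : ∀ i r ε, ηbar r ε ≤ η i r ε := by
    intro i r ε
    rw [hbar]
    exact (min_le_left _ _).trans (Finset.inf'_le _ (Finset.mem_univ i))
  have hbar_half : ∀ r ε, ηbar r ε ≤ 1/2 := by
    intro r ε; rw [hbar]; exact min_le_right _ _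
  have hbar_pos : ∀ r ε : ℝ, 0 < r → ε ∈ Set.Ioc (0:ℝ) 2 → 0 < ηbar r ε := by
    intro r ε hr hε
    rw [hbar]
    refine lt_min ?_ (by norm_num)
    rw [Finset.lt_inf'_iff]
    intro i _
    exact (hηrange i r ε hr hε).1
  have hbar_mono : ∀ r s ε : ℝ, 0 < s → s ≤ r → ε ∈ Set.Ioc (0:ℝ) 2 →
      ηbar r ε ≤ ηbar s ε := by
    intro r s ε hs hsr hε
    rw [hbar, hbar]
    refine min_le_min ?_ le_rfl
    apply Finset.le_inf'
    intro i _
    exact (Finset.inf'_le _ (Finset.mem_univ i)).trans (hηmono i r s ε hs hsr hε)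
  -- range of ηcheck
  have hrange : ∀ r ε : ℝ, 0 < r → ε ∈ Set.Ioc (0:ℝ) 2 →
      ηcheck r ε ∈ Set.Ioc (0:ℝ) 1 := by
    intro r ε hr hε
    have hε2 := hε' ε hε
    have hb0 := hbar_pos r _ hr hε2
    have hbh := hbar_half r (ε / Real.sqrt ((n:ℝ)+1))
    rw [hcheck]
    constructor
    · apply lt_min
      · exact mul_pos (div_pos (pow_pos hε.1 4) (by positivity)) (pow_pos hb0 2)
      · exact mul_pos (div_pos (pow_pos hε.1 2) (by positivity)) hb0
    · refine (min_le_right _ _).trans ?_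
      have h4 : ε^2 ≤ 4 := by nlinarith [hε.1, hε.2]
      have h2 : ε^2/(16*((n:ℝ)+1)) ≤ 1/4 := by
        rw [div_le_iff₀ (by positivity)]
        nlinarith
      have h3 : (0:ℝ) ≤ ε^2/(16*((n:ℝ)+1)) := by positivity
      nlinarith [hb0, hbh]
  -- monotonicity of ηcheck
  have hmono : ∀ r s ε : ℝ, 0 < s → s ≤ r → ε ∈ Set.Ioc (0:ℝ) 2 →
      ηcheck r ε ≤ ηcheck s ε := by
    intro r s ε hs hsr hε
    have hε2 := hε' ε hε
    have hb := hbar_mono r s _ hs hsr hε2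
    have hb0 := hbar_pos r _ (lt_of_lt_of_le hs hsr) hε2
    rw [hcheck, hcheck]
    apply min_le_min
    · exact mul_le_mul_of_nonneg_left (pow_le_pow_left₀ (le_of_lt hb0) hb 2) (by positivity)
    · exact mul_le_mul_of_nonneg_left hb (by positivity)
  refine ⟨hrange, hmono, ?_⟩
  intro r ε hr hε a x y hx hy hxy
  have hε2 := hε' ε hε
  set e' := ε / Real.sqrt ((n:ℝ)+1) with he'
  set b := ηbar r e' with hbdef
  have hb0 : 0 < b := hbar_pos r e' hr hε2
  have hbh : b ≤ 1/2 := hbar_half r e'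
  have he'sq : e'^2 = ε^2/((n:ℝ)+1) := by
    rw [he', div_pow, hssq]
  -- squared versions of the hypotheses
  have hxnn : (0:ℝ) ≤ ∑ i, dist (x i) (a i) ^ 2 :=
    Finset.sum_nonneg fun i _ => sq_nonneg _
  have hynn : (0:ℝ) ≤ ∑ i, dist (y i) (a i) ^ 2 :=
    Finset.sum_nonneg fun i _ => sq_nonneg _
  have hxynn : (0:ℝ) ≤ ∑ i, dist (x i) (y i) ^ 2 :=
    Finset.sum_nonneg fun i _ => sq_nonneg _
  have hxs : ∑ i, dist (x i) (a i) ^ 2 ≤ r ^ 2 := by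
    nlinarith [Real.sq_sqrt hxnn, mul_self_le_mul_self (Real.sqrt_nonneg _) hx]
  have hys : ∑ i, dist (y i) (a i) ^ 2 ≤ r ^ 2 := by
    nlinarith [Real.sq_sqrt hynn, mul_self_le_mul_self (Real.sqrt_nonneg _) hy]
  have hxys : ε^2 * r^2 ≤ ∑ i, dist (x i) (y i) ^ 2 := by
    nlinarith [Real.sq_sqrt hxynn,
      mul_self_le_mul_self (mul_nonneg hε.1.le hr.le) hxy]
  have hu_le : ∀ i, dist (x i) (a i) ≤ r := by
    intro i
    have h1 : dist (x i) (a i)^2 ≤ ∑ j, dist (x j) (a j) ^ 2 :=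
      Finset.single_le_sum (f := fun j => dist (x j) (a j)^2) (fun j _ => sq_nonneg _) (Finset.mem_univ i)
    nlinarith [dist_nonneg (x := x i) (y := a i), hr]
  have hv_le : ∀ i, dist (y i) (a i) ≤ r := by
    intro i
    have h1 : dist (y i) (a i)^2 ≤ ∑ j, dist (y j) (a j) ^ 2 :=
      Finset.single_le_sum (f := fun j => dist (y j) (a j)^2) (fun j _ => sq_nonneg _) (Finset.mem_univ i)
    nlinarith [dist_nonneg (x := y i) (y := a i), hr]
  -- there is a component with large distance
  have hex : ∃ i, e' * r ≤ dist (x i) (y i) := by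
    by_contra hcon
    push_neg at hcon
    have hsum : ∑ i, dist (x i) (y i) ^ 2 < ∑ _i : Fin (n+1), (e' * r)^2 := by
      apply Finset.sum_lt_sum_of_nonempty Finset.univ_nonempty
      intro i _
      have h1 := hcon i
      nlinarith [dist_nonneg (x := x i) (y := y i), mul_pos hε2.1 hr]
    rw [Finset.sum_const, Finset.card_univ, Fintype.card_fin, nsmul_eq_mul] at hsum
    push_cast at hsum
    have hkey : ((n:ℝ)+1) * (e' * r)^2 = ε^2 * r^2 := by
      rw [mul_pow, he'sq]
      field_simp
    linarith
  obtain ⟨i, hi⟩ := hex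
  -- midpoint bound in every coordinate
  have hm_le : ∀ j, dist (W j (x j) (y j) (1/2)) (a j) ≤
      (dist (x j) (a j) + dist (y j) (a j)) / 2 := by
    intro j
    have h := hW1 j (x j) (y j) (a j) (1/2) ⟨by norm_num, by norm_num⟩
    rw [dist_comm (W j (x j) (y j) (1/2)) (a j)]
    rw [dist_comm (a j) (x j), dist_comm (a j) (y j)] at h
    linarith
  have hmnn : ∀ j, (0:ℝ) ≤ dist (W j (x j) (y j) (1/2)) (a j) := fun j => dist_nonneg
  -- the special coordinate i
  set q := max (dist (x i) (a i)) (dist (y i) (a i)) with hqdef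
  have hq_le : q ≤ r := max_le (hu_le i) (hv_le i)
  have htri : dist (x i) (y i) ≤ dist (x i) (a i) + dist (y i) (a i) :=
    dist_triangle_right _ _ _
  have hd2q : dist (x i) (y i) ≤ 2 * q := by
    have h1 : dist (x i) (a i) ≤ q := le_max_left _ _
    have h2 : dist (y i) (a i) ≤ q := le_max_right _ _
    linarith
  have hq_pos : 0 < q := by nlinarith [mul_pos hε2.1 hr]
  have hdq : dist (x i) (y i) ≥ e' * q := by
    have : e' * q ≤ e' * r := mul_le_mul_of_nonneg_left hq_le (le_of_lt hε2.1)
    linarith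
  have hUCi := hUC i q e' hq_pos hε2 (a i) (x i) (y i)
    (le_max_left _ _) (le_max_right _ _) hdq
  have hηq : b ≤ η i q e' :=
    (hbar_le i r e').trans (hηmono i r q e' hq_pos hq_le hε2)
  have hmi : dist (W i (x i) (y i) (1/2)) (a i) ≤ (1 - b) * q := by
    have : (1 - η i q e') * q ≤ (1 - b) * q :=
      mul_le_mul_of_nonneg_right (by linarith) (le_of_lt hq_pos)
    linarith
  -- key inequality at coordinate i
  have hkey_i : dist (W i (x i) (y i) (1/2)) (a i) ^ 2 + b^2/4 * q^2 ≤
      (dist (x i) (a i)^2 + dist (y i) (a i)^2) / 2 := by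
    rcases max_cases (dist (x i) (a i)) (dist (y i) (a i)) with ⟨hmax, hle⟩ | ⟨hmax, hle⟩
    · rw [hqdef, hmax]
      exact stmt8_key _ _ _ b dist_nonneg hle (hmnn i) (hm_le i)
        (by rw [hqdef, hmax] at hmi; exact hmi) hb0 hbh
    · rw [hqdef, hmax]
      have h := stmt8_key (dist (y i) (a i)) (dist (x i) (a i)) _ b dist_nonneg
        (le_of_lt hle) (hmnn i) (by linarith [hm_le i])
        (by rw [hqdef, hmax] at hmi; exact hmi) hb0 hbh
      linarith
  -- sum bound
  have hsum_le : ∑ j, dist (W j (x j) (y j) (1/2)) (a j) ^ 2 ≤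
      r^2 - b^2/4 * q^2 := by
    have h1 : ∀ j : Fin (n+1), dist (W j (x j) (y j) (1/2)) (a j) ^ 2 ≤
        (dist (x j) (a j)^2 + dist (y j) (a j)^2)/2 -
          (if j = i then b^2/4 * q^2 else 0) := by
      intro j
      rcases eq_or_ne j i with hj | hj
      · subst hj
        rw [if_pos rfl]
        linarith [hkey_i]
      · rw [if_neg hj, sub_zero]
        nlinarith [hm_le j, hmnn j, sq_nonneg (dist (x j) (a j) - dist (y j) (a j))]
    calc ∑ j, dist (W j (x j) (y j) (1/2)) (a j) ^ 2
        ≤ ∑ j, ((dist (x j) (a j)^2 + dist (y j) (a j)^2)/2 -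
            (if j = i then b^2/4 * q^2 else 0)) :=
          Finset.sum_le_sum (fun j _ => h1 j)
      _ = (∑ j, (dist (x j) (a j)^2 + dist (y j) (a j)^2)/2) - b^2/4 * q^2 := by
          rw [Finset.sum_sub_distrib,
            Finset.sum_ite_eq' Finset.univ i (fun _ => b^2/4 * q^2),
            if_pos (Finset.mem_univ i)]
      _ ≤ r^2 - b^2/4 * q^2 := by
          have h2 : ∑ j, (dist (x j) (a j)^2 + dist (y j) (a j)^2)/2 ≤ r^2 := by
            rw [← Finset.sum_div, Finset.sum_add_distrib]
            linarith
          linarith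
  -- lower bound on q²
  have hq3 : ε^2/((n:ℝ)+1) * r^2 ≤ 4 * q^2 := by
    have h1 : e'^2 * r^2 ≤ 4 * q^2 := by nlinarith [mul_pos hε2.1 hr, hi, hd2q]
    rwa [he'sq] at h1
  -- the modulus bound
  have hc := hrange r ε hr hε
  have hc_le : 2 * ηcheck r ε ≤ b^2/16 * (ε^2/((n:ℝ)+1)) := by
    have hA : ε^4/(4608*((n:ℝ)+1)^4) ≤ ε^2/(32*((n:ℝ)+1)) := by
      rw [div_le_div_iff₀ (by positivity) (by positivity)]
      have h4 : ε^2 ≤ 4 := by nlinarith [hε.1, hε.2]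
      have hN4 : ((n:ℝ)+1) ≤ ((n:ℝ)+1)^4 := by
        calc ((n:ℝ)+1) = ((n:ℝ)+1)^1 := (pow_one _).symm
          _ ≤ ((n:ℝ)+1)^4 := pow_le_pow_right₀ hN1 (by norm_num)
      have k1 : (ε^2*ε^2)*((n:ℝ)+1) ≤ (ε^2*4)*((n:ℝ)+1) :=
        mul_le_mul_of_nonneg_right (mul_le_mul_of_nonneg_left h4 (sq_nonneg ε)) hNpos.le
      have k2 : 128*(ε^2*((n:ℝ)+1)) ≤ 128*(ε^2*((n:ℝ)+1)^4) := by
        have := mul_le_mul_of_nonneg_left hN4 (sq_nonneg ε)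
        linarith
      nlinarith [k1, k2, mul_nonneg (sq_nonneg ε) (pow_nonneg hNpos.le 4)]
    have h5 : ηcheck r ε ≤ ε^4/(4608*((n:ℝ)+1)^4) * b^2 := by
      rw [hcheck]
      push_cast
      exact min_le_left _ _
    have h6 : ε^4/(4608*((n:ℝ)+1)^4) * b^2 ≤ ε^2/(32*((n:ℝ)+1)) * b^2 :=
      mul_le_mul_of_nonneg_right hA (sq_nonneg b)
    have hne : ((n:ℝ)+1) ≠ 0 := hNpos.ne'
    have h7 : ε^2/(32*((n:ℝ)+1)) * b^2 = (b^2/16 * (ε^2/((n:ℝ)+1))) / 2 := by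
      field_simp
      ring
    linarith
  -- final assembly
  have hfin : ∑ j, dist (W j (x j) (y j) (1/2)) (a j) ^ 2 ≤ ((1 - ηcheck r ε) * r)^2 := by
    have h1 : b^2/16 * (ε^2/((n:ℝ)+1) * r^2) ≤ b^2/16 * (4 * q^2) :=
      mul_le_mul_of_nonneg_left hq3 (by positivity)
    have h2 : 2 * ηcheck r ε * r^2 ≤ b^2/16 * (ε^2/((n:ℝ)+1)) * r^2 :=
      mul_le_mul_of_nonneg_right hc_le (sq_nonneg r)
    have h3 : b^2/16 * (ε^2/((n:ℝ)+1)) * r^2 = b^2/16 * (ε^2/((n:ℝ)+1) * r^2) := by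
      ring
    nlinarith [hsum_le, sq_nonneg (ηcheck r ε * r), h1, h2, h3]
  calc Real.sqrt (∑ j, dist (W j (x j) (y j) (1/2)) (a j) ^ 2)
      ≤ Real.sqrt (((1 - ηcheck r ε) * r)^2) := Real.sqrt_le_sqrt hfin
    _ = (1 - ηcheck r ε) * r := Real.sqrt_sq (by nlinarith [hc.2, hr])
end

section
/- The Poincaré upper half-plane ℍ, with its metric and unique geodesic convexity structure, does not arise as a convex subset of a normed space: there exist x, y, z ∈ ℍ and λ ∈ [0,1] such that d(W(x,z,λ), W(y,z,λ)) < (1−λ)·d(x,y), whereas in any convex subset of a normed space with its canonical convexity structure the equality d(W(x,z,λ), W(y,z,λ)) = (1−λ)·d(x,y) always holds. -/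
/-- The Poincaré upper half-plane is not a convex subset of a normed space:
there exist points x, y, z in ℍ and λ ∈ [0,1] (here λ = 1/2, with W given by
the midpoint formula) such that d(W(x,z,λ), W(y,z,λ)) < (1−λ)·d(x,y), whereas
in any convex subset of a normed space, with W(x,y,λ) = (1−λ)x + λy, one
always has d(W(x,z,λ), W(y,z,λ)) = (1−λ)·d(x,y). -/
theorem stmt15 :
    ∀ dH : ℝ × ℝ → ℝ × ℝ → ℝ,
      (∀ x y : ℝ × ℝ, dH x y =
        Real.log ((1 + ((y.1 - x.1) ^ 2 + (y.2 - x.2) ^ 2) / (2 * x.2 * y.2)) +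
          Real.sqrt ((1 + ((y.1 - x.1) ^ 2 + (y.2 - x.2) ^ 2) /
            (2 * x.2 * y.2)) ^ 2 - 1))) →
    ∀ mH : ℝ × ℝ → ℝ × ℝ → ℝ × ℝ,
      (∀ x y : ℝ × ℝ, mH x y =
        ((x.1 * y.2 + x.2 * y.1) / (x.2 + y.2),
         Real.sqrt (x.2 * y.2) *
           Real.sqrt ((x.2 + y.2) ^ 2 + (x.1 - y.1) ^ 2) / (x.2 + y.2))) →
    ((∃ x y z : ℝ × ℝ, 0 < x.2 ∧ 0 < y.2 ∧ 0 < z.2 ∧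
        dH (mH x z) (mH y z) < (1 - (1/2 : ℝ)) * dH x y) ∧
     (∀ (E : Type) (_ : NormedAddCommGroup E) (_ : NormedSpace ℝ E)
        (C : Set E), Convex ℝ C → ∀ x ∈ C, ∀ y ∈ C, ∀ z ∈ C,
        ∀ t ∈ Set.Icc (0:ℝ) 1,
        dist ((1 - t) • x + t • z) ((1 - t) • y + t • z) =
          (1 - t) * dist x y)) := by
  intro dH hdH mH hmH
  constructor
  · refine ⟨((-1 : ℝ), 1), ((1 : ℝ), 1), ((0 : ℝ), 1), by norm_num, by norm_num, by norm_num, ?_⟩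
    have h5 : Real.sqrt 1 = 1 := Real.sqrt_one
    have hm1 : mH ((-1 : ℝ), 1) ((0 : ℝ), 1) = (-(1/2 : ℝ), Real.sqrt 5 / 2) := by
      rw [hmH]; norm_num
    have hm2 : mH ((1 : ℝ), 1) ((0 : ℝ), 1) = ((1/2 : ℝ), Real.sqrt 5 / 2) := by
      rw [hmH]; norm_num
    rw [hm1, hm2, hdH, hdH]
    have hs5 : Real.sqrt 5 ^ 2 = 5 := Real.sq_sqrt (by norm_num)
    have e1 : (1 + (((1:ℝ)/2 - -(1/2)) ^ 2 + (Real.sqrt 5 / 2 - Real.sqrt 5 / 2) ^ 2) /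
        (2 * (Real.sqrt 5 / 2) * (Real.sqrt 5 / 2))) = 7/5 := by
      have : 2 * (Real.sqrt 5 / 2) * (Real.sqrt 5 / 2) = 5/2 := by
        rw [show 2 * (Real.sqrt 5 / 2) * (Real.sqrt 5 / 2) = Real.sqrt 5 ^ 2 / 2 by ring, hs5]
      rw [this]; ring
    simp only [e1]
    have e2 : (1 + (((1:ℝ) - -1) ^ 2 + ((1:ℝ) - 1) ^ 2) / (2 * 1 * 1)) = 3 := by norm_num
    simp only [e2]
    have hA : (7/5 : ℝ) + Real.sqrt ((7/5)^2 - 1) < Real.sqrt (3 + Real.sqrt (3^2 - 1)) := by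
      have h8 : Real.sqrt ((3:ℝ)^2 - 1) = Real.sqrt 8 := by norm_num
      rw [h8]
      have h8lb : (2.82 : ℝ) < Real.sqrt 8 := by
        rw [show (2.82:ℝ) = Real.sqrt (2.82^2) by rw [Real.sqrt_sq (by norm_num)]]
        exact Real.sqrt_lt_sqrt (by positivity) (by norm_num)
      have hslb : Real.sqrt ((7/5:ℝ)^2 - 1) < 0.98 := by
        rw [show ((7/5:ℝ))^2 - 1 = 24/25 by norm_num]
        rw [show (0.98:ℝ) = Real.sqrt (0.98^2) by rw [Real.sqrt_sq (by norm_num)]]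
        exact Real.sqrt_lt_sqrt (by norm_num) (by norm_num)
      rw [Real.lt_sqrt (by positivity)]
      nlinarith [Real.sqrt_nonneg ((7/5:ℝ)^2 - 1), Real.sq_sqrt (show (0:ℝ) ≤ (7/5:ℝ)^2 - 1 by norm_num)]
    have hpos : (0:ℝ) < 7/5 + Real.sqrt ((7/5)^2 - 1) := by positivity
    calc Real.log (7/5 + Real.sqrt ((7/5)^2 - 1))
        < Real.log (Real.sqrt (3 + Real.sqrt (3^2 - 1))) := Real.log_lt_log hpos hA
      _ = (1 - (1/2 : ℝ)) * Real.log (3 + Real.sqrt (3^2 - 1)) := by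
          rw [Real.log_sqrt (by positivity)]; ring
  · intro E _ _ C _ x _ y _ z _ t ht
    have : (1 - t) • x + t • z - ((1 - t) • y + t • z) = (1 - t) • (x - y) := by
      module
    rw [dist_eq_norm, this, norm_smul, dist_eq_norm]
    simp [Real.norm_eq_abs, abs_of_nonneg (by linarith [ht.2] : (0:ℝ) ≤ 1 - t)]
end
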